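/- Let ℓ ≥ 1 and let (a_n, b_n) be the mex-defined sequences. Let P := {(x,y) : x+y ≤ ℓ} ∪ {(a_n,b_n) : n ≥ 0} ∪ {(b_n,a_n) : n ≥ 0}. Then P is absorbing for the Wythoff moves: for every (x,y) ∈ ℕ² with (x,y) ∉ P (so in particular x+y > ℓ), there exists a Wythoff move from (x,y) to some element of P. -/

import Mathlib

/-- The minimum excluded value of a set of natural numbers. -/
noncomputable def mex (S : Set ℕ) : ℕ := sInf {m : ℕ | m ∉ S}

/-- `MexSeq ℓ a b` says that `a`, `b` are the sequences defined by
    `a 0 = ℓ+1`, `b 0 = 2ℓ+2`, and for `n ≥ 1`: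
    `a n = mex({a i, b i : i < n} ∪ {0,…,ℓ})`, `b n = a n + n + ℓ + 1`. -/
def MexSeq (ℓ : ℕ) (a b : ℕ → ℕ) : Prop :=
  a 0 = ℓ + 1 ∧ b 0 = 2 * ℓ + 2 ∧
  (∀ n : ℕ, 1 ≤ n →
    a n = mex ({m : ℕ | ∃ i < n, m = a i ∨ m = b i} ∪ {m : ℕ | m ≤ ℓ})) ∧
  (∀ n : ℕ, 1 ≤ n → b n = a n + n + ℓ + 1)

/-- A Wythoff move from `p` to `q` in `ℕ × ℕ`: remove a positive number of
    tokens from one pile, or the same positive number from both piles. -/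
def WythoffMove (p q : ℕ × ℕ) : Prop :=
  (q.1 = p.1 ∧ q.2 < p.2) ∨ (q.1 < p.1 ∧ q.2 = p.2) ∨
  (q.1 < p.1 ∧ q.2 < p.2 ∧ p.1 - q.1 = p.2 - q.2)

/-!
Every integer above `ℓ` is some `a n` or `b n`, since `a` grows at least as fast as `n + ℓ + 1`.
From `(x, y)` with `ℓ < x ≤ y`: if `x = b n` move `y` down to `a n < b n`; if `x = a n` and
`y > b n` move `y` down to `b n`; if `x = a n` and `y < b n`, the difference `d = y - x` is at
most `n + ℓ`, so a diagonal move reaches either `(0, d)` (when `d ≤ ℓ`) or `(a m, b m)` with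
`m = d - ℓ - 1 < n`, because `b m - a m = m + ℓ + 1`. A position with `x ≤ ℓ` moves to
`(x, ℓ - x)`, and the case `y ≤ x` follows by symmetry.
-/

lemma mex_notMem {S : Set ℕ} (hS : S.Finite) : mex S ∉ S :=
  Nat.sInf_mem hS.infinite_compl.nonempty

lemma mem_of_lt_mex {S : Set ℕ} {m : ℕ} (h : m < mex S) : m ∈ S := by
  by_contra hm
  exact Nat.notMem_of_lt_sInf h hm

lemma mex_mono {S T : Set ℕ} (hST : S ⊆ T) (hT : T.Finite) : mex S ≤ mex T :=
  Nat.sInf_le fun h => mex_notMem hT (hST h)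

def mexSet (ℓ : ℕ) (a b : ℕ → ℕ) (n : ℕ) : Set ℕ :=
  {m : ℕ | ∃ i < n, m = a i ∨ m = b i} ∪ {m : ℕ | m ≤ ℓ}

lemma mexSet_finite (ℓ : ℕ) (a b : ℕ → ℕ) (n : ℕ) : (mexSet ℓ a b n).Finite := by
  refine Set.Finite.union ?_ (Set.finite_Iic ℓ)
  refine (((Set.finite_Iio n).image a).union ((Set.finite_Iio n).image b)).subset ?_
  rintro m ⟨i, hi, rfl | rfl⟩
  · exact Or.inl ⟨i, hi, rfl⟩
  · exact Or.inr ⟨i, hi, rfl⟩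

lemma mexSet_mono (ℓ : ℕ) (a b : ℕ → ℕ) : Monotone (mexSet ℓ a b) := by
  intro n k hnk m hm
  rcases hm with ⟨i, hi, h⟩ | h
  · exact Or.inl ⟨i, hi.trans_le hnk, h⟩
  · exact Or.inr h

/-- The candidate set of P-positions. -/
def mexPositions (ℓ : ℕ) (a b : ℕ → ℕ) : Set (ℕ × ℕ) :=
  {p : ℕ × ℕ | p.1 + p.2 ≤ ℓ} ∪
    {p : ℕ × ℕ | ∃ n : ℕ, p = (a n, b n)} ∪
    {p : ℕ × ℕ | ∃ n : ℕ, p = (b n, a n)}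

lemma swap_mem_mexPositions {ℓ : ℕ} {a b : ℕ → ℕ} {p : ℕ × ℕ}
    (hp : p ∈ mexPositions ℓ a b) : p.swap ∈ mexPositions ℓ a b := by
  rcases hp with (h | ⟨n, rfl⟩) | ⟨n, rfl⟩
  · refine Or.inl (Or.inl ?_)
    simp only [Set.mem_ofPred_eq, Prod.fst_swap, Prod.snd_swap] at h ⊢
    omega
  · exact Or.inr ⟨n, rfl⟩
  · exact Or.inl (Or.inr ⟨n, rfl⟩)

lemma WythoffMove.swap {p q : ℕ × ℕ} (h : WythoffMove p q) : WythoffMove p.swap q.swap := by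
  rcases h with ⟨h1, h2⟩ | ⟨h1, h2⟩ | ⟨h1, h2, h3⟩
  · exact Or.inr (Or.inl ⟨h2, h1⟩)
  · exact Or.inl ⟨h2, h1⟩
  · exact Or.inr (Or.inr ⟨h2, h1, h3.symm⟩)

namespace MexSeq

variable {ℓ : ℕ} {a b : ℕ → ℕ}

lemma b_eq (hab : MexSeq ℓ a b) (n : ℕ) : b n = a n + n + ℓ + 1 := by
  rcases Nat.eq_zero_or_pos n with rfl | hn
  · have := hab.1; have := hab.2.1; omega
  · exact hab.2.2.2 n hn

lemma a_eq_mex (hab : MexSeq ℓ a b) (n : ℕ) : a n = mex (mexSet ℓ a b n) := by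
  rcases Nat.eq_zero_or_pos n with rfl | hn
  · have hcompl : {m : ℕ | m ∉ mexSet ℓ a b 0} = Set.Ici (ℓ + 1) := by
      ext m
      simp [mexSet]
    rw [hab.1, mex, hcompl, csInf_Ici]
  · exact hab.2.2.1 n hn

lemma a_notMem_mexSet (hab : MexSeq ℓ a b) (n : ℕ) : a n ∉ mexSet ℓ a b n := by
  rw [hab.a_eq_mex n]
  exact mex_notMem (mexSet_finite ℓ a b n)

lemma mem_mexSet_of_lt_a (hab : MexSeq ℓ a b) {n m : ℕ} (hm : m < a n) :
    m ∈ mexSet ℓ a b n :=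
  mem_of_lt_mex (hab.a_eq_mex n ▸ hm)

lemma strictMono_a (hab : MexSeq ℓ a b) : StrictMono a := by
  refine strictMono_nat_of_lt_succ fun n => lt_of_le_of_ne ?_ fun h => ?_
  · rw [hab.a_eq_mex, hab.a_eq_mex]
    exact mex_mono (mexSet_mono ℓ a b n.le_succ) (mexSet_finite ℓ a b _)
  · exact hab.a_notMem_mexSet (n + 1) (Or.inl ⟨n, n.lt_succ_self, Or.inl h.symm⟩)

lemma add_lt_a (hab : MexSeq ℓ a b) (n : ℕ) : n + ℓ < a n := by
  have h := hab.strictMono_a.add_le_nat n 0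
  rw [hab.1, add_zero] at h
  omega

lemma exists_eq_a_or_eq_b (hab : MexSeq ℓ a b) {x : ℕ} (hx : ℓ < x) :
    ∃ i, x = a i ∨ x = b i := by
  have hxa : x < a x := by have := hab.add_lt_a x; omega
  rcases hab.mem_mexSet_of_lt_a hxa with ⟨i, -, h⟩ | h
  · exact ⟨i, h⟩
  · exact absurd h (not_le.mpr hx)

lemma exists_move_of_le (hab : MexSeq ℓ a b) {x y : ℕ} (hxy : x ≤ y)
    (hnot : (x, y) ∉ mexPositions ℓ a b) :
    ∃ q ∈ mexPositions ℓ a b, WythoffMove (x, y) q := by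
  have hsum : ℓ < x + y := not_le.mp fun h => hnot (Or.inl (Or.inl h))
  by_cases hx : x ≤ ℓ
  · exact ⟨(x, ℓ - x), Or.inl (Or.inl (by simp only [Set.mem_ofPred_eq]; omega)),
      Or.inl ⟨rfl, by simp only; omega⟩⟩
  obtain ⟨n, rfl | rfl⟩ := hab.exists_eq_a_or_eq_b (not_le.mp hx)
  · have hbn := hab.b_eq n
    rcases lt_trichotomy y (b n) with hy | rfl | hy
    · by_cases hd : y - a n ≤ ℓ
      · exact ⟨(0, y - a n), Or.inl (Or.inl (by simpa using hd)),
          Or.inr (Or.inr ⟨by omega, by simp only; omega, by simp only; omega⟩)⟩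
      · set m := y - a n - ℓ - 1
        have ham : a m < a n := hab.strictMono_a (by omega)
        have hbm := hab.b_eq m
        exact ⟨(a m, b m), Or.inl (Or.inr ⟨m, rfl⟩),
          Or.inr (Or.inr ⟨ham, by simp only; omega, by simp only; omega⟩)⟩
    · exact absurd (Or.inl (Or.inr ⟨n, rfl⟩)) hnot
    · exact ⟨(a n, b n), Or.inl (Or.inr ⟨n, rfl⟩), Or.inl ⟨rfl, hy⟩⟩
  · have hbn := hab.b_eq n
    exact ⟨(b n, a n), Or.inr ⟨n, rfl⟩, Or.inl ⟨rfl, by simp only; omega⟩⟩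

end MexSeq

theorem mexSeq_ppos_absorbing_general (ℓ : ℕ) (a b : ℕ → ℕ)
    (hab : MexSeq ℓ a b)
    (P : Set (ℕ × ℕ))
    (hP : P = {p : ℕ × ℕ | p.1 + p.2 ≤ ℓ} ∪
          {p : ℕ × ℕ | ∃ n : ℕ, p = (a n, b n)} ∪
          {p : ℕ × ℕ | ∃ n : ℕ, p = (b n, a n)}) :
    ∀ p : ℕ × ℕ, p ∉ P → ∃ q ∈ P, WythoffMove p q := by
  change P = mexPositions ℓ a b at hP
  subst hP
  rintro ⟨x, y⟩ hp
  rcases le_total x y with h | h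
  · exact hab.exists_move_of_le h hp
  · obtain ⟨q, hq, hmove⟩ :=
      hab.exists_move_of_le h fun hmem => hp (swap_mem_mexPositions hmem)
    exact ⟨q.swap, swap_mem_mexPositions hq, hmove.swap⟩

theorem mexSeq_ppos_absorbing (ℓ : ℕ) (hℓ : 1 ≤ ℓ) (a b : ℕ → ℕ)
    (hab : MexSeq ℓ a b)
    (P : Set (ℕ × ℕ))
    (hP : P = {p : ℕ × ℕ | p.1 + p.2 ≤ ℓ} ∪
          {p : ℕ × ℕ | ∃ n : ℕ, p = (a n, b n)} ∪
          {p : ℕ × ℕ | ∃ n : ℕ, p = (b n, a n)}) :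
    ∀ p : ℕ × ℕ, p ∉ P → ∃ q ∈ P, WythoffMove p q :=
  mexSeq_ppos_absorbing_general ℓ a b hab P hP
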